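/- Let (Ω, 𝓕, P) be a probability space, K ≥ 1, and let Z : Ω → Fin K, X, Y, Y₀, Y₁ : Ω → Bool and a family XZ : Fin K → Ω → Bool be measurable, satisfying consistency and X-consistency, with P(Z = z) > 0 for every z. Assume that for every z : Fin K and i : Bool, the pair ⟨XZ z, Y_i⟩ is independent of Z (IndepFun), where Y_i := if i then Y₁ else Y₀. Then for all i, j : Bool: (first family) for every z : Fin K, P(Y_i = j) ≤ P[{X = i} ∩ {Y = j} | {Z = z}] + P[{X = !i} | {Z = z}]; and (second family) for all z ≠ z̃ in Fin K, P(Y_i = j) ≤ P[{X = i} ∩ {Y = j} | {Z = z}] + P[{X = !i} ∩ {Y = false} | {Z = z}] + P[{X = i} ∩ {Y = j} | {Z = z̃}] + P[{X = !i} ∩ {Y = true} | {Z = z̃}]. -/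

import Mathlib

open MeasureTheory ProbabilityTheory

lemma iv_cond_eq_of_indep {Ω : Type*} [MeasurableSpace Ω] (P : Measure Ω) [IsProbabilityMeasure P]
    {K : ℕ} (Z : Ω → Fin K) (hZ : Measurable Z)
    (W : Ω → Bool × Bool) (hind : IndepFun W Z P) (z : Fin K)
    (hz : P {ω | Z ω = z} ≠ 0)
    {S : Set (Bool × Bool)} (hS : MeasurableSet S) {A : Set Ω}
    (hA : ({ω | Z ω = z} ∩ A : Set Ω) =ᵐ[P] ({ω | Z ω = z} ∩ W ⁻¹' S : Set Ω)) :
    P[A | {ω | Z ω = z}] = P (W ⁻¹' S) := by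
  have hB : MeasurableSet {ω | Z ω = z} := hZ (measurableSet_singleton z)
  rw [cond_apply hB, measure_congr hA]
  have hBZ : ({ω | Z ω = z} : Set Ω) = Z ⁻¹' {z} := rfl
  rw [hBZ, Set.inter_comm,
    hind.measure_inter_preimage_eq_mul S {z} hS (measurableSet_singleton z), ← hBZ,
    mul_comm (P (W ⁻¹' S)), ← mul_assoc, ENNReal.inv_mul_cancel hz (measure_ne_top P _), one_mul]

theorem iv_gij_bound
    {Ω : Type*} [MeasurableSpace Ω] (P : Measure Ω) [IsProbabilityMeasure P]
    {K : ℕ} (hK : 1 ≤ K)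
    (Z : Ω → Fin K) (X Y Y₀ Y₁ : Ω → Bool) (XZ : Fin K → Ω → Bool)
    (hZ : Measurable Z) (hX : Measurable X) (hY : Measurable Y)
    (hY₀ : Measurable Y₀) (hY₁ : Measurable Y₁) (hXZ : ∀ z, Measurable (XZ z))
    (hcons : ∀ᵐ ω ∂P, Y ω = if X ω then Y₁ ω else Y₀ ω)
    (hXcons : ∀ᵐ ω ∂P, X ω = XZ (Z ω) ω)
    (hpos : ∀ z : Fin K, 0 < P {ω | Z ω = z})
    (hind : ∀ (z : Fin K) (i : Bool),
      IndepFun (fun ω => (XZ z ω, if i then Y₁ ω else Y₀ ω)) Z P) :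
    ∀ i j : Bool,
      (∀ z : Fin K,
        P {ω | (if i then Y₁ ω else Y₀ ω) = j}
          ≤ P[{ω | X ω = i} ∩ {ω | Y ω = j} | {ω | Z ω = z}]
            + P[{ω | X ω = !i} | {ω | Z ω = z}]) ∧
      (∀ z z' : Fin K, z ≠ z' →
        P {ω | (if i then Y₁ ω else Y₀ ω) = j}
          ≤ P[{ω | X ω = i} ∩ {ω | Y ω = j} | {ω | Z ω = z}]
            + P[{ω | X ω = !i} ∩ {ω | Y ω = false} | {ω | Z ω = z}]
            + P[{ω | X ω = i} ∩ {ω | Y ω = j} | {ω | Z ω = z'}]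
            + P[{ω | X ω = !i} ∩ {ω | Y ω = true} | {ω | Z ω = z'}]) := by
  intro i j
  set Yi : Ω → Bool := fun ω => if i then Y₁ ω else Y₀ ω with hYi
  set Yni : Ω → Bool := fun ω => if !i then Y₁ ω else Y₀ ω with hYni
  have key1 : ∀ z : Fin K,
      P[{ω | X ω = i} ∩ {ω | Y ω = j} | {ω | Z ω = z}]
        = P {ω | XZ z ω = i ∧ Yi ω = j} := by
    intro z
    have hset : ((fun ω => (XZ z ω, Yi ω)) ⁻¹' ({i} ×ˢ {j}) : Set Ω)
        = {ω | XZ z ω = i ∧ Yi ω = j} := by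
      ext ω; simp [Set.mem_prod]
    have := iv_cond_eq_of_indep P Z hZ (fun ω => (XZ z ω, Yi ω)) (hind z i) z
      (hpos z).ne' ((measurableSet_singleton i).prod (measurableSet_singleton j))
      (A := {ω | X ω = i} ∩ {ω | Y ω = j}) ?_
    · rw [this, hset]
    · rw [hset]
      filter_upwards [hcons, hXcons] with ω h1 h2
      rw [eq_iff_iff]
      constructor
      · rintro ⟨hzz, hxi, hyj⟩
        have hzz : Z ω = z := hzz
        have hxi : X ω = i := hxi
        have hyj : Y ω = j := hyj
        refine ⟨hzz, ?_, ?_⟩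
        · rw [← hzz, ← h2]; exact hxi
        · show (if i then Y₁ ω else Y₀ ω) = j
          rw [← hxi, ← h1]; exact hyj
      · rintro ⟨hzz, hxzi, hyij⟩
        have hzz : Z ω = z := hzz
        have hxi : X ω = i := by rw [h2, hzz]; exact hxzi
        refine ⟨hzz, hxi, ?_⟩
        show Y ω = j
        rw [h1, hxi]; exact hyij
  have key2 : ∀ z : Fin K,
      P[{ω | X ω = !i} | {ω | Z ω = z}] = P {ω | XZ z ω = !i} := by
    intro z
    have hset : ((fun ω => (XZ z ω, Yi ω)) ⁻¹' ({!i} ×ˢ Set.univ) : Set Ω)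
        = {ω | XZ z ω = !i} := by
      ext ω
      simp only [Set.mem_preimage, Set.mem_prod, Set.mem_singleton_iff, Set.mem_univ,
        and_true, Set.mem_setOf_eq]
    have := iv_cond_eq_of_indep P Z hZ (fun ω => (XZ z ω, Yi ω)) (hind z i) z
      (hpos z).ne' ((measurableSet_singleton (!i)).prod MeasurableSet.univ)
      (A := {ω | X ω = !i}) ?_
    · rw [this, hset]
    · rw [hset]
      filter_upwards [hXcons] with ω h2
      rw [eq_iff_iff]
      constructor
      · rintro ⟨hzz, hxi⟩
        have hzz : Z ω = z := hzz
        have hxi : X ω = !i := hxi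
        refine ⟨hzz, ?_⟩
        show XZ z ω = !i
        rw [← hzz, ← h2]; exact hxi
      · rintro ⟨hzz, hxzi⟩
        have hzz : Z ω = z := hzz
        have hxzi : XZ z ω = !i := hxzi
        refine ⟨hzz, ?_⟩
        show X ω = !i
        rw [h2, hzz]; exact hxzi
  have key3 : ∀ (z : Fin K) (b : Bool),
      P[{ω | X ω = !i} ∩ {ω | Y ω = b} | {ω | Z ω = z}]
        = P {ω | XZ z ω = !i ∧ Yni ω = b} := by
    intro z b
    have hset : ((fun ω => (XZ z ω, Yni ω)) ⁻¹' ({!i} ×ˢ {b}) : Set Ω)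
        = {ω | XZ z ω = !i ∧ Yni ω = b} := by
      ext ω; simp [Set.mem_prod]
    have := iv_cond_eq_of_indep P Z hZ (fun ω => (XZ z ω, Yni ω)) (hind z (!i)) z
      (hpos z).ne' ((measurableSet_singleton (!i)).prod (measurableSet_singleton b))
      (A := {ω | X ω = !i} ∩ {ω | Y ω = b}) ?_
    · rw [this, hset]
    · rw [hset]
      filter_upwards [hcons, hXcons] with ω h1 h2
      rw [eq_iff_iff]
      constructor
      · rintro ⟨hzz, hxi, hyj⟩
        have hzz : Z ω = z := hzz
        have hxi : X ω = !i := hxi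
        have hyj : Y ω = b := hyj
        refine ⟨hzz, ?_, ?_⟩
        · rw [← hzz, ← h2]; exact hxi
        · show (if !i then Y₁ ω else Y₀ ω) = b
          rw [← hxi, ← h1]; exact hyj
      · rintro ⟨hzz, hxzi, hyij⟩
        have hzz : Z ω = z := hzz
        have hxi : X ω = !i := by rw [h2, hzz]; exact hxzi
        refine ⟨hzz, hxi, ?_⟩
        show Y ω = b
        rw [h1, hxi]; exact hyij
  constructor
  · intro z
    rw [key1 z, key2 z]
    have hsub : {ω | Yi ω = j}
        ⊆ {ω | XZ z ω = i ∧ Yi ω = j} ∪ {ω | XZ z ω = !i} := by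
      intro ω hω
      by_cases h : XZ z ω = i
      · exact Or.inl ⟨h, hω⟩
      · have h' : XZ z ω = !i := by cases i <;> cases hc : XZ z ω <;> simp_all
        exact Or.inr h'
    exact le_trans (measure_mono hsub) (measure_union_le _ _)
  · intro z z' _
    rw [key1 z, key1 z', key3 z false, key3 z' true]
    have hsub : {ω | Yi ω = j}
        ⊆ {ω | XZ z ω = i ∧ Yi ω = j} ∪ {ω | XZ z ω = !i ∧ Yni ω = false}
          ∪ {ω | XZ z' ω = i ∧ Yi ω = j} ∪ {ω | XZ z' ω = !i ∧ Yni ω = true} := by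
      intro ω hω
      by_cases h : XZ z ω = i
      · exact Or.inl (Or.inl (Or.inl ⟨h, hω⟩))
      have h' : XZ z ω = !i := by cases i <;> cases hc : XZ z ω <;> simp_all
      by_cases h2 : XZ z' ω = i
      · exact Or.inl (Or.inr ⟨h2, hω⟩)
      have h2' : XZ z' ω = !i := by cases i <;> cases hc : XZ z' ω <;> simp_all
      cases hb : Yni ω
      · exact Or.inl (Or.inl (Or.inr ⟨h', hb⟩))
      · exact Or.inr ⟨h2', hb⟩
    refine le_trans (measure_mono hsub) ?_
    refine le_trans (measure_union_le _ _) ?_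
    refine add_le_add ?_ le_rfl
    refine le_trans (measure_union_le _ _) ?_
    exact add_le_add (measure_union_le _ _) le_rfl
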